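/- arXiv:2109.13700 — 2 statements merged into one kernel-verified Lean document; each statement's English description precedes it below -/
import Mathlib

section
/- Let λ ≠ 0 and let p(x) be a polynomial of degree n with complex coefficients. If p(x) = ∑_{k=0}^{n} a_k 𝓔_{k,λ}(x), then for each k, a_k = (1/(2 k! λ^k)) ∑_{j=0}^{k} C(k,j) (−1)^{k−j} (p(1 + jλ) + p(jλ)). -/
open Finset PowerSeries Polynomial

/-- The degenerate exponential `e_λ^x(t) = (1+λt)^{x/λ} = ∑_n (x)_{n,λ} t^n/n!`,
given via its power series coefficients. -/
noncomputable def degExp (lam : ℝ) (x : ℂ) : PowerSeries ℂ :=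
  PowerSeries.mk fun n => (∏ i ∈ Finset.range n, (x - (i : ℂ) * (lam : ℂ))) * (n.factorial : ℂ)⁻¹

/-! The functional equation `e_λ^{x+y}(t) = e_λ^x(t) e_λ^y(t)` (a binomial theorem for the
degenerate falling factorials `(x)_{n,λ} = x (x - λ) ⋯ (x - (n-1)λ)`) turns the generating
function of `𝓔_{m,λ}` into `𝓔_{m,λ}(x + 1) + 𝓔_{m,λ}(x) = 2 (x)_{m,λ}`. Hence
`q(x) = p(x + 1) + p(x) = 2 ∑ₘ aₘ (x)_{m,λ}`. The forward difference of step `λ` acts on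
`(x)_{m,λ}` as the ordinary one acts on falling factorials,
`Δ_λ (x)_{m+1,λ} = (m+1) λ (x)_{m,λ}`, so `Δ_λ^k q(0) = 2 k! λ^k a_k`; expanding `Δ_λ^k q(0)`
as an alternating binomial sum of the values `q(jλ)` gives the formula. -/

open Function
open scoped fwdDiff Nat

def degFallingFactorial (lam x : ℂ) (n : ℕ) : ℂ :=
  ∏ i ∈ range n, (x - i * lam)

namespace degFallingFactorial

variable (lam : ℂ)

@[simp]
lemma zero_right (x : ℂ) : degFallingFactorial lam x 0 = 1 := prod_range_zero _

lemma succ_right (x : ℂ) (n : ℕ) :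
    degFallingFactorial lam x (n + 1) = degFallingFactorial lam x n * (x - n * lam) :=
  prod_range_succ _ n

lemma succ_left (x : ℂ) (n : ℕ) :
    degFallingFactorial lam (x + lam) (n + 1) = (x + lam) * degFallingFactorial lam x n := by
  rw [degFallingFactorial, prod_range_succ', degFallingFactorial]
  push_cast
  rw [mul_comm]
  congr 1
  · ring
  · exact prod_congr rfl fun i _ => by ring

lemma zero_left (n : ℕ) : degFallingFactorial lam 0 n = if n = 0 then 1 else 0 := by
  cases n with
  | zero => simp
  | succ n => simp [degFallingFactorial, prod_range_succ']

lemma add (x y : ℂ) (n : ℕ) :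
    degFallingFactorial lam (x + y) n = ∑ ij ∈ antidiagonal n,
      n.choose ij.1 * (degFallingFactorial lam x ij.1 * degFallingFactorial lam y ij.2) := by
  induction n with
  | zero => simp
  | succ n ih =>
    rw [sum_antidiagonal_choose_succ_mul
      (fun i j => degFallingFactorial lam x i * degFallingFactorial lam y j),
      succ_right, ih, sum_mul, ← sum_add_distrib]
    refine sum_congr rfl fun ij hij => ?_
    have hsum : ij.1 + ij.2 = n := mem_antidiagonal.mp hij
    rw [Nat.choose_symm_of_eq_add hsum.symm, succ_right, succ_right, ← hsum]
    push_cast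
    ring

lemma fwdDiff_succ (n : ℕ) :
    Δ_[lam] (degFallingFactorial lam · (n + 1)) =
      ((n + 1) * lam) • (degFallingFactorial lam · n) := by
  ext x
  rw [fwdDiff, succ_left, succ_right, Pi.smul_apply, smul_eq_mul]
  ring

lemma fwdDiff_iter_eval_zero (k n : ℕ) :
    Δ_[lam] ^[k] (degFallingFactorial lam · n) 0 = if n = k then k ! * lam ^ k else 0 := by
  induction k generalizing n with
  | zero => simp [zero_left]
  | succ k ih =>
    rw [Function.iterate_succ_apply]
    cases n with
    | zero => simp [fwdDiff_iter_eq_sum_shift]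
    | succ n =>
      rw [fwdDiff_succ, fwdDiff_iter_const_smul, Pi.smul_apply, ih, smul_eq_mul]
      by_cases h : n = k
      · subst h
        simp only [if_true, Nat.factorial_succ]
        push_cast
        ring
      · simp [h]

end degFallingFactorial

lemma coeff_degExp (lam : ℝ) (x : ℂ) (n : ℕ) :
    coeff n (degExp lam x) = degFallingFactorial lam x n * (n ! : ℂ)⁻¹ := coeff_mk _ _

lemma degExp_add (lam : ℝ) (x y : ℂ) :
    degExp lam (x + y) = degExp lam x * degExp lam y := by
  ext n
  rw [PowerSeries.coeff_mul, coeff_degExp, degFallingFactorial.add, sum_mul]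
  refine sum_congr rfl fun ij hij => ?_
  obtain rfl : ij.1 + ij.2 = n := mem_antidiagonal.mp hij
  rw [coeff_degExp, coeff_degExp, Nat.cast_add_choose]
  have h₁ : (ij.1 ! : ℂ) ≠ 0 := Nat.cast_ne_zero.mpr ij.1.factorial_ne_zero
  have h₂ : (ij.2 ! : ℂ) ≠ 0 := Nat.cast_ne_zero.mpr ij.2.factorial_ne_zero
  have h₃ : ((ij.1 + ij.2)! : ℂ) ≠ 0 := Nat.cast_ne_zero.mpr (ij.1 + ij.2).factorial_ne_zero
  field_simp

lemma constantCoeff_degExp (lam : ℝ) (x : ℂ) :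
    PowerSeries.constantCoeff (degExp lam x) = 1 := by
  rw [← coeff_zero_eq_constantCoeff_apply, coeff_degExp]
  simp

lemma eulerPoly_add_one_add (lam : ℝ) (E : ℕ → ℂ → ℂ)
    (hE : ∀ x : ℂ,
      (PowerSeries.mk fun n => E n x * (n.factorial : ℂ)⁻¹) * (degExp lam 1 + 1)
        = (2 : ℂ) • degExp lam x)
    (x : ℂ) (m : ℕ) :
    E m (x + 1) + E m x = 2 * degFallingFactorial lam x m := by
  have hden : degExp lam 1 + 1 ≠ 0 := fun h => by
    simpa [constantCoeff_degExp] using congrArg PowerSeries.constantCoeff h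
  have hgen : (PowerSeries.mk fun n => (E n (x + 1) + E n x) * (n ! : ℂ)⁻¹) =
      (2 : ℂ) • degExp lam x := by
    refine mul_right_cancel₀ hden ?_
    calc (PowerSeries.mk fun n => (E n (x + 1) + E n x) * (n ! : ℂ)⁻¹) * (degExp lam 1 + 1)
        = (PowerSeries.mk fun n => E n (x + 1) * (n ! : ℂ)⁻¹) * (degExp lam 1 + 1)
          + (PowerSeries.mk fun n => E n x * (n ! : ℂ)⁻¹) * (degExp lam 1 + 1) := by
          rw [← add_mul]
          congr 1
          ext n
          simp [add_mul]
      _ = (2 : ℂ) • degExp lam x * (degExp lam 1 + 1) := by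
          rw [hE, hE, degExp_add, smul_mul_assoc, mul_add, mul_one, smul_add]
  have hcoeff := congrArg (PowerSeries.coeff m) hgen
  rw [coeff_mk, map_smul, coeff_degExp, smul_eq_mul, ← mul_assoc] at hcoeff
  exact mul_right_cancel₀ (inv_ne_zero (Nat.cast_ne_zero.mpr m.factorial_ne_zero)) hcoeff

theorem repr_by_deg_euler_general (lam : ℝ) (hlam : lam ≠ 0)
    (E : ℕ → ℂ → ℂ)
    (hE : ∀ x : ℂ,
      (PowerSeries.mk fun n => E n x * (n.factorial : ℂ)⁻¹)
          * (degExp lam 1 + 1)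
        = (2 : ℂ) • degExp lam x)
    (n : ℕ) (p : Polynomial ℂ) (a : ℕ → ℂ)
    (hpa : ∀ x : ℂ, p.eval x = ∑ k ∈ Finset.range (n + 1), a k * E k x) :
    ∀ k ≤ n,
      a k = (1 / (2 * (k.factorial : ℂ) * (lam : ℂ) ^ k))
        * ∑ j ∈ Finset.range (k + 1), (k.choose j : ℂ) * (-1) ^ (k - j)
            * (p.eval (1 + (j : ℂ) * (lam : ℂ)) + p.eval ((j : ℂ) * (lam : ℂ))) := by
  intro k hk
  have hsum : ∑ j ∈ range (k + 1), (k.choose j : ℂ) * (-1) ^ (k - j)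
        * (p.eval (1 + (j : ℂ) * (lam : ℂ)) + p.eval ((j : ℂ) * (lam : ℂ))) =
      Δ_[(lam : ℂ)] ^[k] (fun x => p.eval (1 + x) + p.eval x) 0 := by
    rw [fwdDiff_iter_eq_sum_shift]
    refine sum_congr rfl fun j _ => ?_
    simp only [zero_add, nsmul_eq_mul, zsmul_eq_mul]
    push_cast
    ring
  have hq : (fun x => p.eval (1 + x) + p.eval x) =
      ∑ m ∈ range (n + 1), (2 * a m) • (degFallingFactorial lam · m) := by
    ext x
    simp only [hpa, ← sum_add_distrib, ← mul_add, add_comm 1 x, eulerPoly_add_one_add lam E hE,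
      Finset.sum_apply, Pi.smul_apply, smul_eq_mul]
    exact sum_congr rfl fun m _ => by ring
  have hdiff : Δ_[(lam : ℂ)] ^[k] (fun x => p.eval (1 + x) + p.eval x) 0 =
      2 * a k * (k ! * lam ^ k) := by
    rw [hq, fwdDiff_iter_finsetSum, Finset.sum_apply]
    simp only [fwdDiff_iter_const_smul, Pi.smul_apply, degFallingFactorial.fwdDiff_iter_eval_zero,
      smul_eq_mul, mul_ite, mul_zero, sum_ite_eq', mem_range, Nat.lt_succ_of_le hk, if_true]
  have hlam' : (lam : ℂ) ≠ 0 := Complex.ofReal_ne_zero.mpr hlam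
  have hfac : (k ! : ℂ) ≠ 0 := Nat.cast_ne_zero.mpr k.factorial_ne_zero
  rw [hsum, hdiff]
  field_simp

theorem repr_by_deg_euler (lam : ℝ) (hlam : lam ≠ 0)
    (E : ℕ → ℂ → ℂ)
    (hE : ∀ x : ℂ,
      (PowerSeries.mk fun n => E n x * (n.factorial : ℂ)⁻¹)
          * (degExp lam 1 + 1)
        = (2 : ℂ) • degExp lam x)
    (n : ℕ) (p : Polynomial ℂ) (hp : p.natDegree = n) (a : ℕ → ℂ)
    (hpa : ∀ x : ℂ, p.eval x = ∑ k ∈ Finset.range (n + 1), a k * E k x) :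
    ∀ k ≤ n,
      a k = (1 / (2 * (k.factorial : ℂ) * (lam : ℂ) ^ k))
        * ∑ j ∈ Finset.range (k + 1), (k.choose j : ℂ) * (-1) ^ (k - j)
            * (p.eval (1 + (j : ℂ) * (lam : ℂ)) + p.eval ((j : ℂ) * (lam : ℂ))) :=
  repr_by_deg_euler_general lam hlam E hE n p a hpa
end

section
/- For u ≠ 1 and nonnegative integers m, n: B_m(x) H_n(x|u) = m·H_{m+n−1}(x|u) + ∑_{r=0}^{m} C(m,r) B_r H_{m+n−r}(x|u) + (mu/(1−u)) ∑_{s=0}^{n} C(n,s) H_s(u) H_{m+n−s−1}(x|u), where B_r are the Bernoulli numbers and B_m(x) the Bernoulli polynomials. -/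
/-!
Both sides are polynomials in `x`: the generating function yields the Appell expansion
`H_k(x) = ∑_j C(k,j) H_j x^(k-j)`, the analogue of the defining expansion of `B_m(x)`, and the
shift rule `H_k(x+1) = u H_k(x) + (1-u) x^k`. Together with `B_m(x+1) = B_m(x) + m x^(m-1)`
this shows that each side `f` satisfies
`f(x+1) = u f(x) + (1-u) x^n B_m(x) + m x^(m-1) (u H_n(x) + (1-u) x^n)`; the factor `mu/(1-u)`
is exactly what matches the `x^(m-1) H_n(x)` terms. The difference `D` of the two sides thus has
`D(x+1) = u D(x)`, and comparing leading coefficients gives `D = 0` since `u ≠ 1`.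
-/

open Finset

theorem PowerSeries.exp_sub_C_ne_zero {A : Type*} [Ring A] [Algebra ℚ A] [Nontrivial A] (u : A) :
    PowerSeries.exp A - PowerSeries.C u ≠ 0 := fun h => by
  simpa [PowerSeries.coeff_exp] using congrArg (PowerSeries.coeff 1) h

open Polynomial in
theorem Polynomial.eq_zero_of_eval_add_one_eq_mul {R : Type*} [CommRing R] [IsDomain R]
    [Infinite R] {u : R} (hu : u ≠ 1) {p : R[X]} (h : ∀ x, p.eval (x + 1) = u * p.eval x) :
    p = 0 := by
  have hcomp : p.comp (X + C 1) = C u * p := Polynomial.funext fun x => by simp [h]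
  have hlc : p.leadingCoeff = u * p.leadingCoeff := by
    have := congrArg leadingCoeff hcomp
    rwa [leadingCoeff_comp (by rw [natDegree_X_add_C]; exact one_ne_zero), leadingCoeff_mul,
      leadingCoeff_C, leadingCoeff_X_add_C, one_pow, mul_one] at this
  have : (1 - u) * p.leadingCoeff = 0 := by linear_combination hlc
  exact leadingCoeff_eq_zero.mp <| (mul_eq_zero.mp this).resolve_left (sub_ne_zero.mpr hu.symm)

variable {K : Type*} [Field K]

namespace PowerSeries

def egf (a : ℕ → K) : K⟦X⟧ :=
  mk fun n => a n * (n.factorial : K)⁻¹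

theorem coeff_egf (a : ℕ → K) (n : ℕ) : coeff n (egf a) = a n * (n.factorial : K)⁻¹ :=
  coeff_mk _ _

variable [CharZero K]

theorem rescale_exp_eq_egf (x : K) : rescale x (exp K) = egf (x ^ ·) := by
  ext n
  simp [coeff_egf, coeff_exp]

theorem coeff_egf_mul_egf (a b : ℕ → K) (n : ℕ) :
    coeff n (egf a * egf b)
      = (∑ j ∈ range (n + 1), n.choose j * a j * b (n - j)) * (n.factorial : K)⁻¹ := by
  rw [coeff_mul, Nat.sum_antidiagonal_eq_sum_range_succ_mk, sum_mul]
  refine sum_congr rfl fun j hj => ?_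
  have := Nat.cast_ne_zero (R := K) |>.mpr n.factorial_ne_zero
  rw [coeff_egf, coeff_egf, Nat.cast_choose K (mem_range_succ_iff.mp hj)]
  field_simp

end PowerSeries

/-- The right-hand side, written as a `K`-linear combination of the `F k` so that it can be formed
both from the values `H k x` and from polynomials representing them. -/
def nielsenRHS {R : Type*} [AddCommGroup R] [Module K R] (u : K) (c : ℕ → K) (F : ℕ → R)
    (m n : ℕ) : R :=
  (m : K) • F (m + n - 1)
    + ∑ r ∈ range (m + 1), ((m.choose r : K) * (bernoulli r : K)) • F (m + n - r)
    + ((m : K) * u / (1 - u)) •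
        ∑ s ∈ range (n + 1), ((n.choose s : K) * c s) • F (m + n - s - 1)

theorem Polynomial.eval_nielsenRHS (u : K) (c : ℕ → K) (F : ℕ → Polynomial K) (m n : ℕ)
    (x : K) :
    (nielsenRHS u c F m n).eval x = nielsenRHS u c (fun k => (F k).eval x) m n := by
  simp [nielsenRHS, eval_finsetSum]

variable [CharZero K]

namespace Polynomial

theorem eval_map_bernoulli (m : ℕ) (x : K) :
    ((bernoulli m).map (algebraMap ℚ K)).eval x
      = ∑ r ∈ range (m + 1), (m.choose r : K) * (_root_.bernoulli r : K) * x ^ (m - r) := by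
  simp [bernoulli, Polynomial.map_sum, eval_finsetSum, mul_comm]

theorem eval_map_bernoulli_add_one (m : ℕ) (x : K) :
    ((bernoulli m).map (algebraMap ℚ K)).eval (x + 1)
      = ((bernoulli m).map (algebraMap ℚ K)).eval x + m * x ^ (m - 1) := by
  have := congr(eval x ($(bernoulli_comp_one_add_X m).map (algebraMap ℚ K)))
  simpa [add_comm, aeval_comp] using this

end Polynomial

open PowerSeries

def IsFrobeniusEulerFamily (u : K) (H : ℕ → K → K) : Prop :=
  ∀ x, egf (H · x) * (exp K - C u) = (1 - u) • rescale x (exp K)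

namespace IsFrobeniusEulerFamily

variable {u : K} {H : ℕ → K → K}

theorem egf_add (hH : IsFrobeniusEulerFamily u H) (x y : K) :
    egf (H · (x + y)) = rescale y (exp K) * egf (H · x) := by
  apply mul_right_cancel₀ (exp_sub_C_ne_zero u)
  rw [hH (x + y), ← exp_mul_exp_eq_exp_add x y, mul_assoc, hH x, mul_smul_comm, mul_comm]

theorem eq_sum_choose_mul_pow (hH : IsFrobeniusEulerFamily u H) (k : ℕ) (x : K) :
    H k x = ∑ j ∈ range (k + 1), k.choose j * H j 0 * x ^ (k - j) := by
  have h := congrArg (coeff k) (hH.egf_add 0 x)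
  rw [zero_add, rescale_exp_eq_egf, mul_comm, coeff_egf, coeff_egf_mul_egf] at h
  simpa [Nat.factorial_ne_zero] using h

theorem add_one (hH : IsFrobeniusEulerFamily u H) (k : ℕ) (x : K) :
    H k (x + 1) = u * H k x + (1 - u) * x ^ k := by
  have hegf : egf (H · (x + 1)) - C u * egf (H · x) = (1 - u) • egf (x ^ ·) := by
    rw [hH.egf_add, rescale_one, ← rescale_exp_eq_egf, ← hH x]
    simp only [RingHom.id_apply]
    ring
  have h := congrArg (coeff k) hegf
  simp only [map_sub, coeff_C_mul, coeff_smul, coeff_egf, smul_eq_mul] at h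
  have := Nat.factorial_ne_zero k
  field_simp at h
  linear_combination h

theorem sum_mul_add_one (hH : IsFrobeniusEulerFamily u H) (a : ℕ → K) {k N : ℕ}
    (hkN : k ≤ N) (x : K) :
    ∑ j ∈ range (k + 1), a j * H (N - j) (x + 1)
      = u * ∑ j ∈ range (k + 1), a j * H (N - j) x
        + (1 - u) * x ^ (N - k) * ∑ j ∈ range (k + 1), a j * x ^ (k - j) := by
  simp only [hH.add_one, mul_sum, ← sum_add_distrib]
  refine sum_congr rfl fun j hj => ?_
  have hN : N - j = N - k + (k - j) := by have := mem_range_succ_iff.mp hj; omega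
  rw [hN, pow_add]
  ring

theorem exists_polynomial_eval_eq (hH : IsFrobeniusEulerFamily u H) (k : ℕ) :
    ∃ p : Polynomial K, ∀ x, p.eval x = H k x :=
  ⟨∑ j ∈ range (k + 1), Polynomial.C (k.choose j * H j 0) * Polynomial.X ^ (k - j),
    fun x => by simp [Polynomial.eval_finsetSum, hH.eq_sum_choose_mul_pow k x]⟩

theorem nielsenRHS_add_one (hH : IsFrobeniusEulerFamily u H) (hu : u ≠ 1) {m : ℕ} (hm : m ≠ 0)
    (n : ℕ) (x : K) :
    nielsenRHS u (H · 0) (H · (x + 1)) m n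
      = u * nielsenRHS u (H · 0) (H · x) m n
        + (1 - u) * (m * x ^ (m - 1) * x ^ n
          + x ^ n * ((Polynomial.bernoulli m).map (algebraMap ℚ K)).eval x)
        + m * u * x ^ (m - 1) * H n x := by
  have hsub : ∀ s, m + n - s - 1 = m + n - 1 - s := fun s => Nat.sub_right_comm _ _ _
  simp only [nielsenRHS, smul_eq_mul, hsub]
  rw [hH.add_one, hH.sum_mul_add_one _ (by omega : m ≤ m + n),
    hH.sum_mul_add_one _ (by omega : n ≤ m + n - 1), ← Polynomial.eval_map_bernoulli,
    ← hH.eq_sum_choose_mul_pow, show m + n - 1 = m - 1 + n by omega,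
    show m + n - m = n by omega, show m - 1 + n - n = m - 1 by omega, pow_add]
  have : (1 : K) - u ≠ 0 := sub_ne_zero.mpr hu.symm
  field_simp
  ring

end IsFrobeniusEulerFamily

open Polynomial in
theorem nielsen_bernoulli_frobenius_euler (u : ℂ) (hu : u ≠ 1) (H : ℕ → ℂ → ℂ)
    (hH : ∀ x : ℂ,
      (PowerSeries.mk fun n => H n x * (n.factorial : ℂ)⁻¹)
          * (PowerSeries.exp ℂ - PowerSeries.C u)
        = (1 - u) • PowerSeries.rescale x (PowerSeries.exp ℂ))
    (m n : ℕ) :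
    ∀ x : ℂ,
      ((Polynomial.bernoulli m).map (algebraMap ℚ ℂ)).eval x * H n x
        = (m : ℂ) * H (m + n - 1) x
          + ∑ r ∈ Finset.range (m + 1), (m.choose r : ℂ) * (bernoulli r : ℂ) * H (m + n - r) x
          + ((m : ℂ) * u / (1 - u))
              * ∑ s ∈ Finset.range (n + 1), (n.choose s : ℂ) * H s 0 * H (m + n - s - 1) x := by
  intro x
  obtain rfl | hm := eq_or_ne m 0
  · simp
  have hFE : IsFrobeniusEulerFamily u H := hH
  choose A hA using hFE.exists_polynomial_eval_eq
  set B := (Polynomial.bernoulli m).map (algebraMap ℚ ℂ)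
  have key : B * A n = nielsenRHS u (H · 0) A m n := by
    refine sub_eq_zero.mp (eq_zero_of_eval_add_one_eq_mul hu fun y => ?_)
    simp only [eval_sub, eval_mul, eval_nielsenRHS, hA]
    rw [eval_map_bernoulli_add_one, hFE.add_one, hFE.nielsenRHS_add_one hu hm]
    ring
  have := congr(eval x $key)
  simp only [eval_mul, eval_nielsenRHS, hA] at this
  exact this
end
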